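/- Let G be a finite group and n a positive integer. The number of pairs (x, y) ∈ G² such that {x, y} generates G is divisible by the order of the commutator subgroup [G, G]. -/

import Mathlib

/-!
Induction on `|[G, G]|`. Let `N = [G, G] ∩ Z(G)`.

If `N = 1`, then `[G, G]` acts freely by conjugation on the generating pairs, because an element
commuting with both entries of a generating pair is central.

Otherwise `N` consists of non-generators: if `H N = G`, then, `N` being central, every commutator
of `G` is a commutator of elements of `H`, so `[G, G] ≤ H` and hence `H = G`. Thus `(x, y)`
generates `G` iff its image generates `G / N`, so the generating pairs of `G` are the full
preimage of those of `G / N` and number `|N|²` times as many, while `|[G, G]| = |N| · |[G/N, G/N]|`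
because `[G/N, G/N]` is the image of `[G, G]`.
-/

open Subgroup
open scoped commutatorElement

def generatingPairs (G : Type*) [Group G] : SubMulAction (MulAut G) (G × G) where
  carrier := {p | Subgroup.closure {p.1, p.2} = ⊤}
  smul_mem' σ p hp := by
    simp only [Set.mem_ofPred_eq, Prod.smul_fst, Prod.smul_snd, MulAut.smul_def] at hp ⊢
    rw [← Set.image_pair, ← MulEquiv.coe_toMonoidHom, ← MonoidHom.map_closure, hp]
    exact map_top_of_surjective _ σ.surjective

section

variable {G : Type*} [Group G]

theorem commutatorElement_mul_mul_of_mem_center (a b : G) {m n : G} (hm : m ∈ center G)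
    (hn : n ∈ center G) : ⁅a * m, b * n⁆ = ⁅a, b⁆ := by
  have hm' := mem_center_iff.mp hm
  have hn' := mem_center_iff.mp hn
  rw [commutatorElement_def, commutatorElement_def]
  calc a * m * (b * n) * (a * m)⁻¹ * (b * n)⁻¹
      = a * (m * (b * n) * m⁻¹) * a⁻¹ * n⁻¹ * b⁻¹ := by group
    _ = a * b * (n * a⁻¹ * n⁻¹) * b⁻¹ := by rw [← hm' (b * n), mul_inv_cancel_right]; group
    _ = a * b * a⁻¹ * b⁻¹ := by rw [← hn' a⁻¹, mul_inv_cancel_right]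

theorem Subgroup.normal_of_le_center {N : Subgroup G} (hN : N ≤ center G) : N.Normal :=
  ⟨fun n hn g => by rwa [mem_center_iff.mp (hN hn) g, mul_inv_cancel_right]⟩

theorem Subgroup.eq_top_of_sup_eq_top_of_le_commutator_inf_center {H N : Subgroup G}
    (hN : N ≤ _root_.commutator G ⊓ center G) (h : H ⊔ N = ⊤) : H = ⊤ := by
  have hNc : N ≤ center G := hN.trans inf_le_right
  have : N.Normal := normal_of_le_center hNc
  suffices _root_.commutator G ≤ H by rwa [sup_eq_left.mpr ((hN.trans inf_le_left).trans this)] at h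
  have hmul (g : G) : ∃ x ∈ H, ∃ n ∈ N, x * n = g := by
    simpa [← SetLike.mem_coe, mul_normal, Set.mem_mul] using (h ▸ mem_top g : g ∈ H ⊔ N)
  rw [_root_.commutator_def, commutator_le]
  rintro g - g' -
  obtain ⟨x, hx, n, hn, rfl⟩ := hmul g
  obtain ⟨x', hx', n', hn', rfl⟩ := hmul g'
  rw [commutatorElement_mul_mul_of_mem_center x x' (hNc hn) (hNc hn')]
  exact H.commutator_le_self (commutator_mem_commutator hx hx')

theorem Subgroup.map_mk'_eq_top_iff {N : Subgroup G} [N.Normal]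
    (hN : N ≤ _root_.commutator G ⊓ center G) {H : Subgroup G} :
    H.map (QuotientGroup.mk' N) = ⊤ ↔ H = ⊤ := by
  refine ⟨fun h => eq_top_of_sup_eq_top_of_le_commutator_inf_center hN ?_, fun h => ?_⟩
  · rw [← QuotientGroup.ker_mk' N, ← comap_map_eq, h, comap_top]
  · rw [h, ← MonoidHom.range_eq_map, QuotientGroup.range_mk']

theorem coe_generatingPairs_eq_preimage {N : Subgroup G} [N.Normal]
    (hN : N ≤ commutator G ⊓ center G) :
    (generatingPairs G : Set (G × G)) =
      (QuotientGroup.mk' N).prodMap (QuotientGroup.mk' N) ⁻¹' generatingPairs (G ⧸ N) := by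
  ext p
  change Subgroup.closure _ = ⊤ ↔ Subgroup.closure _ = ⊤
  rw [← map_mk'_eq_top_iff hN, MonoidHom.map_closure, Set.image_pair]
  rfl

theorem MonoidHom.card_preimage_of_surjective {H : Type*} [Group H] {f : G →* H}
    (hf : Function.Surjective f) (t : Set H) :
    Nat.card (f ⁻¹' t) = Nat.card f.ker * Nat.card t := by
  let e := QuotientGroup.quotientKerEquivOfSurjective f hf
  rw [show f ⁻¹' t = QuotientGroup.mk ⁻¹' (e ⁻¹' t) from rfl, QuotientGroup.card_preimage_mk,
    Nat.card_preimage_of_injective e.injective (by simp [e.surjective.range_eq])]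

theorem card_generatingPairs_eq_mul {N : Subgroup G} [N.Normal]
    (hN : N ≤ commutator G ⊓ center G) :
    Nat.card (generatingPairs G) =
      Nat.card (generatingPairs (G ⧸ N)) * (Nat.card N * Nat.card N) := by
  have hf : Function.Surjective ((QuotientGroup.mk' N).prodMap (QuotientGroup.mk' N)) :=
    Prod.map_surjective.mpr ⟨QuotientGroup.mk'_surjective N, QuotientGroup.mk'_surjective N⟩
  rw [← SetLike.coe_sort_coe, coe_generatingPairs_eq_preimage hN,
    MonoidHom.card_preimage_of_surjective hf, MonoidHom.ker_prodMap, QuotientGroup.ker_mk',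
    Nat.card_congr (N.prodEquiv N).toEquiv, Nat.card_prod, mul_comm]
  rfl

theorem commutator_quotient_eq_map (N : Subgroup G) [N.Normal] :
    commutator (G ⧸ N) = (commutator G).map (QuotientGroup.mk' N) := by
  rw [map_commutator_eq, QuotientGroup.range_mk', _root_.commutator_def]

theorem card_commutator_eq_mul {N : Subgroup G} [N.Normal] (hN : N ≤ commutator G) :
    Nat.card (commutator G) = Nat.card (commutator (G ⧸ N)) * Nat.card N := by
  rw [commutator_quotient_eq_map, ← relIndex_ker, QuotientGroup.ker_mk', ← relIndex_bot_left,
    ← relIndex_bot_left N, mul_comm, relIndex_mul_relIndex _ _ _ bot_le hN]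

theorem card_dvd_card_generatingPairs_of_inf_center_eq_bot {K : Subgroup G}
    (hK : K ⊓ center G = ⊥) : Nat.card K ∣ Nat.card (generatingPairs G) := by
  let _ : MulAction K (generatingPairs G) := MulAction.compHom _ (MulAut.conj.comp K.subtype)
  have hfree (p : generatingPairs G) : MulAction.stabilizer K p = ⊥ := by
    refine (eq_bot_iff_forall _).mpr fun k hk => ?_
    have hk : (k : G) * p.1.1 * k⁻¹ = p.1.1 ∧ (k : G) * p.1.2 * k⁻¹ = p.1.2 :=
      Prod.ext_iff.mp (congrArg Subtype.val hk)
    have hcen : (k : G) ∈ center G := by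
      rw [center_eq_iInf p.2]
      simp [mem_iInf, mem_centralizer_singleton_iff, mul_inv_eq_iff_eq_mul.mp hk.1,
        mul_inv_eq_iff_eq_mul.mp hk.2]
    have hk1 : (k : G) ∈ K ⊓ center G := ⟨k.2, hcen⟩
    rw [hK, mem_bot] at hk1
    exact Subtype.ext hk1
  rw [Nat.card_congr (MulAction.selfEquivOrbitsQuotientProd hfree), Nat.card_prod]
  exact dvd_mul_left _ _

end

theorem card_commutator_dvd_card_generatingPairs (G : Type*) [Group G] [Finite G] :
    Nat.card (commutator G) ∣ Nat.card (generatingPairs G) := by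
  induction hn : Nat.card (commutator G) using Nat.strong_induction_on generalizing G with
  | _ n ih =>
  subst hn
  by_cases hZ : commutator G ⊓ center G = ⊥
  · exact card_dvd_card_generatingPairs_of_inf_center_eq_bot hZ
  set N := commutator G ⊓ center G
  have : N.Normal := normal_of_le_center inf_le_right
  have hcard := card_commutator_eq_mul (N := N) inf_le_left
  have hlt : Nat.card (commutator (G ⧸ N)) < Nat.card (commutator G) := by
    rw [hcard]
    exact lt_mul_of_one_lt_right Nat.card_pos ((one_lt_card_iff_ne_bot N).mpr hZ)
  rw [hcard, card_generatingPairs_eq_mul le_rfl]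
  exact mul_dvd_mul (ih _ hlt (G ⧸ N) rfl) (dvd_mul_left _ _)

theorem stmt_5 (G : Type*) [Group G] [Fintype G] :
    Nat.card (commutator G) ∣
      Nat.card {p : G × G | Subgroup.closure {p.1, p.2} = ⊤} :=
  card_commutator_dvd_card_generatingPairs G
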